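/- arXiv:2104.02792 — 3 statements merged into one kernel-verified Lean document; each statement's English description precedes it below -/
import Mathlib

section
/- The function y(x) = U(x) √(U'(x)), with U(x) = tanh(x/√2), satisfies y'' - (3U² - 1) y = -(3/2) y on ℝ; i.e., it is an eigenfunction of the linearized Allen–Cahn operator with eigenvalue -3/2. -/
noncomputable def U : ℝ → ℝ := fun x => Real.tanh (x / Real.sqrt 2)

noncomputable def y : ℝ → ℝ := fun x => U x * Real.sqrt (deriv U x)

/-!
With `t = x / √2` one has `U' = (√2 cosh² t)⁻¹`, so `y` is a constant multiple of
`g t = sinh t / cosh² t`. Differentiating twice and using `cosh² - sinh² = 1` gives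
`g'' = (6 tanh² - 5) g`, and the factor `1/2` from the chain rule turns this into
`y'' = (3 U² - 5/2) y`.
-/

open Real

namespace Real

theorem hasDerivAt_tanh (t : ℝ) : HasDerivAt tanh (cosh t ^ 2)⁻¹ t := by
  have hc : cosh t ≠ 0 := (cosh_pos t).ne'
  rw [show tanh = sinh / cosh from funext tanh_eq_sinh_div_cosh]
  refine ((hasDerivAt_sinh t).div (hasDerivAt_cosh t) hc).congr_deriv ?_
  field_simp
  linear_combination cosh_sq_sub_sinh_sq t

theorem hasDerivAt_sinh_div_cosh_sq (t : ℝ) :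
    HasDerivAt (fun t => sinh t / cosh t ^ 2) (2 / cosh t ^ 3 - 1 / cosh t) t := by
  have hc : cosh t ≠ 0 := (cosh_pos t).ne'
  have hquot := (hasDerivAt_sinh t).div ((hasDerivAt_cosh t).fun_pow 2) (pow_ne_zero 2 hc)
  refine hquot.congr_deriv ?_
  simp only [Nat.cast_ofNat, Nat.reduceSub, pow_one]
  field_simp
  linear_combination 2 * cosh_sq_sub_sinh_sq t

theorem hasDerivAt_two_div_cosh_pow_three_sub_inv_cosh (t : ℝ) :
    HasDerivAt (fun t => 2 / cosh t ^ 3 - 1 / cosh t)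
      ((6 * tanh t ^ 2 - 5) * (sinh t / cosh t ^ 2)) t := by
  have hc : cosh t ≠ 0 := (cosh_pos t).ne'
  have h3 := (hasDerivAt_const t (2 : ℝ)).div ((hasDerivAt_cosh t).fun_pow 3) (pow_ne_zero 3 hc)
  have h1 := (hasDerivAt_const t (1 : ℝ)).div (hasDerivAt_cosh t) hc
  refine (h3.sub h1).congr_deriv ?_
  rw [tanh_eq_sinh_div_cosh]
  simp only [Nat.cast_ofNat, Nat.reduceSub]
  field_simp
  linear_combination 6 * sinh t * cosh_sq_sub_sinh_sq t

end Real

theorem deriv_deriv_const_mul_comp_div {f f' f'' : ℝ → ℝ}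
    (hf : ∀ t, HasDerivAt f (f' t) t) (hf' : ∀ t, HasDerivAt f' (f'' t) t) (c a x : ℝ) :
    deriv (deriv fun x => c * f (x / a)) x = c * f'' (x / a) / a ^ 2 := by
  have hdiv (x : ℝ) : HasDerivAt (fun x => x / a) a⁻¹ x := by
    simpa [div_eq_mul_inv] using (hasDerivAt_id x).div_const a
  have hfirst : deriv (fun x => c * f (x / a)) = fun x => c * (f' (x / a) * a⁻¹) :=
    funext fun x => (((hf _).comp x (hdiv x)).const_mul c).deriv
  rw [hfirst]
  exact ((((hf' _).comp x (hdiv x)).mul_const a⁻¹).const_mul c).deriv.trans (by ring)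

theorem hasDerivAt_U (x : ℝ) : HasDerivAt U ((√2)⁻¹ * (cosh (x / √2) ^ 2)⁻¹) x := by
  refine ((hasDerivAt_tanh (x / √2)).comp x ((hasDerivAt_id x).div_const √2)).congr_deriv ?_
  simp [mul_comm]

theorem y_eq_const_mul_sinh_div_cosh_sq :
    y = fun x => (√(√2))⁻¹ * (sinh (x / √2) / cosh (x / √2) ^ 2) := by
  funext x
  have hsqrt : √(deriv U x) = (√(√2))⁻¹ * (cosh (x / √2))⁻¹ := by
    rw [(hasDerivAt_U x).deriv, ← inv_pow, sqrt_mul (by positivity), sqrt_inv,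
      sqrt_sq (by positivity)]
  rw [y, hsqrt, U, tanh_eq_sinh_div_cosh]
  field_simp

theorem second_eigenfunction :
    ∀ x : ℝ, deriv (deriv y) x - (3 * (U x) ^ 2 - 1) * y x = -(3 / 2) * y x := by
  intro x
  rw [y_eq_const_mul_sinh_div_cosh_sq, deriv_deriv_const_mul_comp_div hasDerivAt_sinh_div_cosh_sq
    hasDerivAt_two_div_cosh_pow_three_sub_inv_cosh, sq_sqrt zero_le_two, U]
  ring
end

section
/- There exists a constant λ₀ > 0 such that for every v ∈ H¹(ℝ) with v(0) = 0, one has ∫_ℝ [-(v')² - (3U² - 1) v²] dx ≤ -λ₀ ∫_ℝ v² dx, where U(x) = tanh(x/√2). -/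
open MeasureTheory Filter Set

noncomputable def psi : ℝ → ℝ := fun x =>
  (Real.cosh (x / Real.sqrt 2) ^ 2 - 2 * Real.sinh (x / Real.sqrt 2) ^ 2) * Real.sqrt 2 /
    (2 * Real.sinh (x / Real.sqrt 2) * Real.cosh (x / Real.sqrt 2))

lemma sqrt2_pos : (0:ℝ) < Real.sqrt 2 := Real.sqrt_pos.mpr (by norm_num)

lemma sqrt2_sq : Real.sqrt 2 ^ 2 = 2 := Real.sq_sqrt (by norm_num)

lemma alg (S C c : ℝ) (hS : S ≠ 0) (hC : C ≠ 0) (hc : c ^ 2 = 2) :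
    3 * (S/C)^2 - 5/2 - ((C^2 - 2*S^2) * c / (2*S*C))^2 =
    ((((2:ℕ) : ℝ) * C ^ 1 * (S * (1/c)) - 2 * (((2:ℕ):ℝ) * S ^ 1 * (C * (1/c)))) * c * (2*S*C) -
      (C^2 - 2*S^2) * c * (2 * (C * (1/c)) * C + 2 * S * (S * (1/c)))) / (2*S*C)^2 := by
  have hcne : c ≠ 0 := by intro h; rw [h] at hc; norm_num at hc
  field_simp
  ring_nf
  linear_combination (4*S^2*C^2 - 4*S^4 - C^4) * hc

lemma psi_hasDerivAt {x : ℝ} (hx : 0 < x) :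
    HasDerivAt psi (3 * U x ^ 2 - 5/2 - psi x ^ 2) x := by
  have hcpos : (0:ℝ) < Real.sqrt 2 := sqrt2_pos
  have hc2 : Real.sqrt 2 ^ 2 = 2 := sqrt2_sq
  set c := Real.sqrt 2
  have hspos : 0 < x / c := div_pos hx hcpos
  have hS : 0 < Real.sinh (x / c) := Real.sinh_pos_iff.mpr hspos
  have hC : 0 < Real.cosh (x / c) := Real.cosh_pos _
  have hid : HasDerivAt (fun y : ℝ => y / c) (1 / c) x := by
    simpa using (hasDerivAt_id x).div_const c
  have hSin : HasDerivAt (fun y => Real.sinh (y / c)) (Real.cosh (x / c) * (1 / c)) x :=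
    by have := (Real.hasDerivAt_sinh (x / c)).comp x hid; exact this
  have hCos : HasDerivAt (fun y => Real.cosh (y / c)) (Real.sinh (x / c) * (1 / c)) x :=
    by have := (Real.hasDerivAt_cosh (x / c)).comp x hid; exact this
  have hNum : HasDerivAt
      (fun y => (Real.cosh (y / c) ^ 2 - 2 * Real.sinh (y / c) ^ 2) * c)
      ((((2:ℕ):ℝ) * Real.cosh (x / c) ^ 1 * (Real.sinh (x / c) * (1/c)) -
        2 * (((2:ℕ):ℝ) * Real.sinh (x / c) ^ 1 * (Real.cosh (x / c) * (1/c)))) * c) x :=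
    ((hCos.pow 2).sub ((hSin.pow 2).const_mul 2)).mul_const c
  have hDen : HasDerivAt (fun y => 2 * Real.sinh (y / c) * Real.cosh (y / c))
      (2 * (Real.cosh (x / c) * (1/c)) * Real.cosh (x / c) +
        2 * Real.sinh (x / c) * (Real.sinh (x / c) * (1/c))) x :=
    (hSin.const_mul 2).mul hCos
  have hden : 2 * Real.sinh (x / c) * Real.cosh (x / c) ≠ 0 := by positivity
  have h := hNum.div hDen hden
  have hU : U x = Real.sinh (x / c) / Real.cosh (x / c) := by
    rw [U, Real.tanh_eq_sinh_div_cosh]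
  convert h using 1
  · rfl
  · rfl
  · rfl
  rw [hU]
  exact alg _ _ _ (ne_of_gt hS) (ne_of_gt hC) hc2

lemma psi_ge {x : ℝ} (hx : 0 < x) : -1 ≤ psi x := by
  rw [psi]
  have hcpos : (0:ℝ) < Real.sqrt 2 := sqrt2_pos
  have hc2 : Real.sqrt 2 ^ 2 = 2 := sqrt2_sq
  set c := Real.sqrt 2 with hcdef
  have hspos : 0 < x / c := div_pos hx hcpos
  have hS : 0 < Real.sinh (x / c) := Real.sinh_pos_iff.mpr hspos
  have hC : 0 < Real.cosh (x / c) := Real.cosh_pos _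
  have hCS : Real.cosh (x/c) ^ 2 = Real.sinh (x/c) ^ 2 + 1 := Real.cosh_sq _
  have hc1 : 1 ≤ c := by nlinarith
  have hc32 : c ≤ 3/2 := by nlinarith
  rw [le_div_iff₀ (by positivity)]
  rcases le_or_gt (Real.sinh (x/c)) 1 with h|h
  · nlinarith [mul_pos hS hC]
  · have hCgtS : Real.sinh (x/c) < Real.cosh (x/c) := by nlinarith
    nlinarith [mul_le_mul_of_nonneg_left hCgtS.le (by positivity : (0:ℝ) ≤ 2 * Real.sinh (x/c)),
      mul_le_mul_of_nonneg_left hc32 (by nlinarith : (0:ℝ) ≤ Real.sinh (x/c)^2 - 1)]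

lemma psi_abs_le {a : ℝ} (ha : 0 < a) (ha1 : a ≤ 1) : |psi a| ≤ 9 / a := by
  rw [psi]
  have hcpos : (0:ℝ) < Real.sqrt 2 := sqrt2_pos
  have hc2 : Real.sqrt 2 ^ 2 = 2 := sqrt2_sq
  set c := Real.sqrt 2 with hcdef
  have hc1 : 1 ≤ c := by nlinarith
  have hspos : 0 < a / c := div_pos ha hcpos
  have hs1 : a / c ≤ 1 := by rw [div_le_one hcpos]; linarith
  set S := Real.sinh (a / c) with hSdef
  set C := Real.cosh (a / c) with hCdef
  have hS : 0 < S := Real.sinh_pos_iff.mpr hspos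
  have hC : 0 < C := Real.cosh_pos _
  have hSlb : a / c ≤ S := le_of_lt (Real.self_lt_sinh_iff.mpr hspos)
  have hCub : C ≤ 3 := by
    rw [hCdef, Real.cosh_eq]
    have h1 : Real.exp (a/c) ≤ Real.exp 1 := Real.exp_le_exp.mpr hs1
    have h2 : Real.exp (-(a/c)) ≤ 1 := Real.exp_le_one_iff.mpr (by linarith)
    have h3 : Real.exp 1 < 2.7182818286 := Real.exp_one_lt_d9
    linarith
  have hCS : C ^ 2 = S ^ 2 + 1 := Real.cosh_sq _
  rw [abs_div, abs_of_pos (by positivity : (0:ℝ) < 2 * S * C),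
    div_le_div_iff₀ (by positivity) ha]
  have habs : |(C ^ 2 - 2 * S ^ 2) * c| ≤ 3 * C ^ 2 * c := by
    rw [abs_mul, abs_of_pos hcpos]
    have h4 : |C ^ 2 - 2 * S ^ 2| ≤ 3 * C ^ 2 := by
      rw [abs_le]; constructor <;> nlinarith
    nlinarith
  have hca : 2 * (a/c) = c * a := by
    rw [← hc2]; field_simp
  calc |(C ^ 2 - 2 * S ^ 2) * c| * a ≤ (3 * C ^ 2 * c) * a := by
        exact mul_le_mul_of_nonneg_right habs (le_of_lt ha)
    _ = 6 * (C * (C * (a/c))) := by rw [show (3:ℝ) * C^2 * c * a = 3 * C^2 * (c*a) by ring, ← hca]; ring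
    _ ≤ 6 * (C * (3 * (a/c))) := by
        have : C * (a/c) ≤ 3 * (a/c) := mul_le_mul_of_nonneg_right hCub (le_of_lt hspos)
        nlinarith
    _ = 18 * C * (a/c) := by ring
    _ ≤ 18 * C * S := by nlinarith
    _ = 9 * (2 * S * C) := by ring

lemma U_cont : Continuous U := by
  have : U = fun x => Real.sinh (x / Real.sqrt 2) / Real.cosh (x / Real.sqrt 2) := by
    funext x; rw [U, Real.tanh_eq_sinh_div_cosh]
  rw [this]
  exact (Real.continuous_sinh.comp (continuous_id.div_const _)).div
    (Real.continuous_cosh.comp (continuous_id.div_const _))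
    (fun x => ne_of_gt (Real.cosh_pos _))

lemma U_sq_le_one (x : ℝ) : U x ^ 2 ≤ 1 := by
  rw [U, Real.tanh_eq_sinh_div_cosh, div_pow, div_le_one (by positivity)]
  nlinarith [Real.cosh_sq (x / Real.sqrt 2)]

lemma psi_contOn : ContinuousOn psi (Set.Ioi 0) := by
  apply ContinuousOn.div
  · exact (((Real.continuous_cosh.comp (continuous_id.div_const _)).pow 2).sub
      (continuous_const.mul ((Real.continuous_sinh.comp (continuous_id.div_const _)).pow 2))).mul
      continuous_const |>.continuousOn
  · exact ((continuous_const.mul (Real.continuous_sinh.comp (continuous_id.div_const _))).mul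
      (Real.continuous_cosh.comp (continuous_id.div_const _))).continuousOn
  · intro x hx
    have hs : 0 < x / Real.sqrt 2 := div_pos hx sqrt2_pos
    have := Real.sinh_pos_iff.mpr hs
    have := Real.cosh_pos (x / Real.sqrt 2)
    positivity

lemma halfline (v : ℝ → ℝ) (hv : ContDiff ℝ 1 v) (hv2 : Integrable (fun x => v x ^ 2))
    (hv'2 : Integrable (fun x => deriv v x ^ 2)) (hv0 : v 0 = 0) :
    0 ≤ ∫ x in Set.Ioi (0:ℝ), (deriv v x ^ 2 + (3 * U x ^ 2 - 5/2) * v x ^ 2) := by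
  have hvc : Continuous v := hv.continuous
  have hdc : Continuous (deriv v) := hv.continuous_deriv le_rfl
  have hvd : ∀ x : ℝ, HasDerivAt v (deriv v x) x := fun x =>
    (hv.differentiable one_ne_zero x).hasDerivAt
  set H : ℝ → ℝ := fun x => deriv v x ^ 2 + (3 * U x ^ 2 - 5/2) * v x ^ 2 with hHdef
  set G : ℝ → ℝ := fun x => psi x * v x ^ 2 with hGdef
  set D : ℝ → ℝ := fun x => H x - (deriv v x - psi x * v x) ^ 2 with hDdef
  have hHc : Continuous H := by
    apply (hdc.pow 2).add
    exact ((continuous_const.mul (U_cont.pow 2)).sub continuous_const).mul (hvc.pow 2)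
  have hcoefInt : Integrable (fun x => (3 * U x ^ 2 - 5/2) * v x ^ 2) := by
    refine (hv2.const_mul (5/2)).mono'
      (((continuous_const.mul (U_cont.pow 2)).sub continuous_const).mul
        (hvc.pow 2)).aestronglyMeasurable
      (Filter.Eventually.of_forall fun x => ?_)
    have h1 : U x ^ 2 ≤ 1 := U_sq_le_one x
    have h2 : (0:ℝ) ≤ U x ^ 2 := sq_nonneg _
    have h3 : (0:ℝ) ≤ v x ^ 2 := sq_nonneg _
    rw [Real.norm_eq_abs, abs_mul, abs_of_nonneg h3]
    have : |3 * U x ^ 2 - 5/2| ≤ 5/2 := by rw [abs_le]; constructor <;> nlinarith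
    nlinarith
  have hHint : Integrable H := hv'2.add hcoefInt
  -- key derivative
  have hG : ∀ x, 0 < x → HasDerivAt G (D x) x := by
    intro x hx
    have h1 := (psi_hasDerivAt hx).mul ((hvd x).pow 2)
    convert h1 using 1
    · rfl
    · rfl
    · rfl
    simp only [hDdef, hHdef, Pi.pow_apply]
    push_cast
    ring
  -- FTC step
  have step : ∀ a b : ℝ, 0 < a → a ≤ b → G b - G a ≤ ∫ x in a..b, H x := by
    intro a b ha hab
    have husb : uIcc a b = Icc a b := uIcc_of_le hab
    have hsub : Icc a b ⊆ Ioi 0 := fun x hx => lt_of_lt_of_le ha hx.1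
    have hDcont : ContinuousOn D (Icc a b) := by
      apply ContinuousOn.sub (hHc.continuousOn)
      exact (((hdc.continuousOn).sub ((psi_contOn.mono hsub).mul hvc.continuousOn)).pow 2)
    have hDint : IntervalIntegrable D volume a b := by
      apply ContinuousOn.intervalIntegrable; rwa [husb]
    have hft := intervalIntegral.integral_eq_sub_of_hasDerivAt
      (f := G) (f' := D) (fun x hx => hG x (hsub (husb ▸ hx))) hDint
    rw [← hft]
    exact intervalIntegral.integral_mono_on hab hDint (hHc.intervalIntegrable a b)
      (fun x hx => sub_le_self _ (sq_nonneg _))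
  -- frequently small values
  have hfreq : ∀ ε : ℝ, 0 < ε → ∃ᶠ b in atTop, v b ^ 2 < ε := by
    intro ε hε
    by_contra hcon
    rw [Filter.not_frequently] at hcon
    simp only [not_lt] at hcon
    obtain ⟨M, hM⟩ := eventually_atTop.mp hcon
    have hio : IntegrableOn (fun x => v x ^ 2) (Ioi M) := hv2.integrableOn
    have hconst : Integrable (fun _ : ℝ => ε) (volume.restrict (Ioi M)) := by
      refine hio.mono' aestronglyMeasurable_const ?_
      rw [ae_restrict_iff' measurableSet_Ioi]
      exact Filter.Eventually.of_forall fun x hx => by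
        rw [Real.norm_eq_abs, abs_of_pos hε]; exact hM x hx.le
    rw [integrable_const_iff] at hconst
    rcases hconst with h | h
    · exact absurd h (ne_of_gt hε)
    · have h := h.measure_univ_lt_top
      rw [Measure.restrict_apply_univ, Real.volume_Ioi] at h
      exact absurd h (by simp)
  -- bound near zero
  obtain ⟨K, hK⟩ : ∃ K, ∀ y ∈ Icc (0:ℝ) 1, ‖deriv v y‖ ≤ K :=
    (isCompact_Icc).exists_bound_of_continuousOn hdc.continuousOn
  have hvK : ∀ a ∈ Icc (0:ℝ) 1, |v a| ≤ K * a := by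
    intro a hax
    have := norm_image_sub_le_of_norm_deriv_le_segment'
      (f := v) (f' := deriv v) (a := (0:ℝ)) (b := 1)
      (fun x hx => (hvd x).hasDerivWithinAt)
      (fun x hx => hK x (Ico_subset_Icc_self hx)) a hax
    rw [hv0, sub_zero, sub_zero, Real.norm_eq_abs] at this
    exact this
  have hK0 : 0 ≤ K := le_trans (norm_nonneg _) (hK 0 (by norm_num))
  obtain ⟨MH, hMH⟩ : ∃ MH, ∀ y ∈ Icc (0:ℝ) 1, ‖H y‖ ≤ MH :=
    (isCompact_Icc).exists_bound_of_continuousOn hHc.continuousOn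
  have hGbound : ∀ a ∈ Ioc (0:ℝ) 1, |G a| ≤ 9 * K ^ 2 * a := by
    intro a ha
    have h1 : |psi a| ≤ 9 / a := psi_abs_le ha.1 ha.2
    have h2 : |v a| ≤ K * a := hvK a ⟨ha.1.le, ha.2⟩
    have h3 : v a ^ 2 ≤ K ^ 2 * a ^ 2 := by nlinarith [abs_nonneg (v a), neg_abs_le (v a), le_abs_self (v a)]
    have : |G a| = |psi a| * v a ^ 2 := by
      rw [hGdef]; simp [abs_mul, sq_abs]
    rw [this]
    calc |psi a| * v a ^ 2 ≤ (9 / a) * (K ^ 2 * a ^ 2) := by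
          apply mul_le_mul h1 h3 (sq_nonneg _) (le_of_lt (div_pos (by norm_num) ha.1))
      _ = 9 * K ^ 2 * a := by field_simp [ha.1.ne']
  -- main inequality for each small a
  have hmain : ∀ a ∈ Ioc (0:ℝ) 1,
      (∫ x in (0:ℝ)..a, H x) - G a ≤ ∫ x in Ioi (0:ℝ), H x := by
    intro a ha
    have hIa : -G a ≤ ∫ x in Ioi a, H x := by
      have tends := MeasureTheory.intervalIntegral_tendsto_integral_Ioi a
        (hHint.integrableOn) (tendsto_id (α := ℝ))
      have hεa : ∀ ε : ℝ, 0 < ε → -G a ≤ (∫ x in Ioi a, H x) + 2 * ε := by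
        intro ε hε
        have hev : ∀ᶠ b in atTop, (∫ x in a..b, H x) < (∫ x in Ioi a, H x) + ε :=
          tends.eventually_lt_const (by linarith)
        obtain ⟨b, hb1, hb2, hb3⟩ :=
          ((hfreq ε hε).and_eventually (hev.and (eventually_ge_atTop a))).exists
        have h0b : 0 < b := lt_of_lt_of_le ha.1 hb3
        have hGb : -(v b ^ 2) ≤ G b := by
          have hp := psi_ge h0b
          have h3 := mul_le_mul_of_nonneg_right hp (sq_nonneg (v b))
          simpa [hGdef] using h3
        have hstep := step a b ha.1 hb3
        have hvb : v b ^ 2 < ε := hb1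
        linarith [hb2]
      by_contra hlt
      push_neg at hlt
      have := hεa ((-G a - (∫ x in Ioi a, H x)) / 4) (by linarith)
      linarith
    have hsplit : (∫ x in Ioc (0:ℝ) a, H x) + (∫ x in Ioi a, H x) = ∫ x in Ioi (0:ℝ), H x := by
      rw [← MeasureTheory.setIntegral_union (Ioc_disjoint_Ioi le_rfl) measurableSet_Ioi
        hHint.integrableOn hHint.integrableOn, Ioc_union_Ioi_eq_Ioi ha.1.le]
    have hFa : (∫ x in (0:ℝ)..a, H x) = ∫ x in Ioc (0:ℝ) a, H x :=
      intervalIntegral.integral_of_le ha.1.le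
    linarith
  -- limit
  have hbound : ∀ᶠ a in nhdsWithin (0:ℝ) (Ioi 0),
      ‖(∫ x in (0:ℝ)..a, H x) - G a‖ ≤ (MH + 9 * K ^ 2) * a := by
    filter_upwards [Ioc_mem_nhdsGT (zero_lt_one)] with a ha
    have hF : ‖∫ x in (0:ℝ)..a, H x‖ ≤ MH * |a - 0| := by
      apply intervalIntegral.norm_integral_le_of_norm_le_const
      intro x hx
      rw [uIoc_of_le ha.1.le] at hx
      exact hMH x ⟨hx.1.le, hx.2.trans ha.2⟩
    rw [sub_zero, abs_of_pos ha.1] at hF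
    have hG2 := hGbound a ha
    rw [Real.norm_eq_abs]
    calc |(∫ x in (0:ℝ)..a, H x) - G a| ≤ |∫ x in (0:ℝ)..a, H x| + |G a| := abs_sub _ _
      _ ≤ MH * a + 9 * K ^ 2 * a := add_le_add (by rwa [← Real.norm_eq_abs]) hG2
      _ = (MH + 9 * K ^ 2) * a := by ring
  have hlim : Tendsto (fun a => (∫ x in (0:ℝ)..a, H x) - G a)
      (nhdsWithin (0:ℝ) (Ioi 0)) (nhds 0) := by
    apply squeeze_zero_norm' hbound
    have : Tendsto (fun a : ℝ => (MH + 9 * K ^ 2) * a) (nhds 0) (nhds 0) := by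
      simpa using (continuous_mul_left (MH + 9 * K ^ 2)).tendsto (0:ℝ)
    exact this.mono_left nhdsWithin_le_nhds
  have hev2 : ∀ᶠ a in nhdsWithin (0:ℝ) (Ioi 0),
      (∫ x in (0:ℝ)..a, H x) - G a ≤ ∫ x in Ioi (0:ℝ), H x := by
    filter_upwards [Ioc_mem_nhdsGT (zero_lt_one)] with a ha using hmain a ha
  exact le_of_tendsto hlim hev2

lemma U_neg (x : ℝ) : U (-x) = - U x := by
  rw [U]; simp only [neg_div]; exact Real.tanh_neg _

theorem spectral_gap_zero_condition :
    ∃ lam₀ > (0:ℝ), ∀ v : ℝ → ℝ,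
      ContDiff ℝ 1 v →
      Integrable (fun x => (v x) ^ 2) →
      Integrable (fun x => (deriv v x) ^ 2) →
      v 0 = 0 →
      (∫ x : ℝ, (-(deriv v x) ^ 2 - (3 * (U x) ^ 2 - 1) * (v x) ^ 2)) ≤
        -lam₀ * ∫ x : ℝ, (v x) ^ 2 := by
  refine ⟨3/2, by norm_num, fun v hv hv2 hv'2 hv0 => ?_⟩
  have hvc : Continuous v := hv.continuous
  have hdc : Continuous (deriv v) := hv.continuous_deriv le_rfl
  set H : ℝ → ℝ := fun x => deriv v x ^ 2 + (3 * U x ^ 2 - 5/2) * v x ^ 2 with hHdef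
  set P : ℝ → ℝ := fun x => deriv v x ^ 2 + (3 * U x ^ 2 - 1) * v x ^ 2 with hPdef
  have hcoef : ∀ (c : ℝ), 0 ≤ c → (∀ x, |3 * U x ^ 2 - c| ≤ max c 3) → True := fun _ _ _ => trivial
  have hcoefInt : ∀ c : ℝ, Integrable (fun x => (3 * U x ^ 2 - c) * v x ^ 2) := by
    intro c
    refine (hv2.const_mul (3 + |c|)).mono'
      (((continuous_const.mul (U_cont.pow 2)).sub continuous_const).mul
        (hvc.pow 2)).aestronglyMeasurable
      (Filter.Eventually.of_forall fun x => ?_)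
    have h1 : U x ^ 2 ≤ 1 := U_sq_le_one x
    have h2 : (0:ℝ) ≤ U x ^ 2 := sq_nonneg _
    have h3 : (0:ℝ) ≤ v x ^ 2 := sq_nonneg _
    rw [Real.norm_eq_abs, abs_mul, abs_of_nonneg h3]
    have h4 : |3 * U x ^ 2 - c| ≤ 3 + |c| := by
      rw [abs_le]
      constructor <;> nlinarith [le_abs_self c, neg_abs_le c]
    nlinarith
  have hHint : Integrable H := hv'2.add (hcoefInt (5/2))
  have hPint : Integrable P := hv'2.add (hcoefInt 1)
  -- right half line
  have hIoi : 0 ≤ ∫ x in Ioi (0:ℝ), H x := halfline v hv hv2 hv'2 hv0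
  -- left half line via reflection
  have hIio : 0 ≤ ∫ x in Iio (0:ℝ), H x := by
    set w : ℝ → ℝ := fun x => v (-x) with hwdef
    have hw : ContDiff ℝ 1 w := hv.comp contDiff_neg
    have hwd : ∀ x : ℝ, deriv w x = deriv v (-x) * (-1) := by
      intro x
      have h1 : HasDerivAt w (deriv v (-x) * (-1)) x :=
        ((hv.differentiable one_ne_zero (-x)).hasDerivAt).comp x (hasDerivAt_neg x)
      exact h1.deriv
    have hemb := (Homeomorph.neg ℝ).isClosedEmbedding.measurableEmbedding
    have hmp := Measure.measurePreserving_neg (volume : Measure ℝ)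
    have hw2 : Integrable (fun x => w x ^ 2) := by
      have := (MeasurePreserving.integrable_comp_emb hmp hemb
        (g := fun x => v x ^ 2)).mpr hv2
      exact this
    have hw'2 : Integrable (fun x => deriv w x ^ 2) := by
      have h2 := (MeasurePreserving.integrable_comp_emb hmp hemb
        (g := fun x => deriv v x ^ 2)).mpr hv'2
      have : (fun x => deriv w x ^ 2) = (fun x => deriv v x ^ 2) ∘ (fun x : ℝ => -x) := by
        funext x; simp [hwd x]
      rwa [this]
    have hw0 : w 0 = 0 := by simp [hwdef, hv0]
    have h0 := halfline w hw hw2 hw'2 hw0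
    have heq : (fun x => deriv w x ^ 2 + (3 * U x ^ 2 - 5/2) * w x ^ 2)
        = fun x => H (-x) := by
      funext x
      have hU : U x ^ 2 = U (-x) ^ 2 := by rw [U_neg]; ring
      rw [hwd x]
      simp only [hHdef, hwdef, hU]
      ring
    rw [heq] at h0
    rwa [integral_comp_neg_Ioi, neg_zero, MeasureTheory.integral_Iic_eq_integral_Iio] at h0
  have hsum : (∫ x in Iio (0:ℝ), H x) + (∫ x in Ioi (0:ℝ), H x) = ∫ x : ℝ, H x := by
    rw [← MeasureTheory.integral_Iic_eq_integral_Iio]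
    exact intervalIntegral.integral_Iic_add_Ioi hHint.integrableOn hHint.integrableOn
  have hHtot : 0 ≤ ∫ x : ℝ, H x := by linarith
  have hHsub : (∫ x : ℝ, H x) = (∫ x : ℝ, P x) - (3/2) * ∫ x : ℝ, v x ^ 2 := by
    have h1 : (fun x => H x) = fun x => P x - (3/2) * v x ^ 2 := by
      funext x; simp only [hHdef, hPdef]; ring
    rw [h1, integral_sub hPint (hv2.const_mul (3/2)), integral_const_mul]
  have hgoal : (fun x => -(deriv v x) ^ 2 - (3 * (U x) ^ 2 - 1) * (v x) ^ 2)
      = fun x => -(P x) := by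
    funext x; simp only [hPdef]; ring
  rw [hgoal, integral_neg]
  have : (3:ℝ)/2 * ∫ x : ℝ, v x ^ 2 ≤ ∫ x : ℝ, P x := by linarith
  linarith
end

section
/- With the hypotheses of the spectral-gap-on-subspaces setting (self-adjoint L with eigenvalues δ ≥ λ₁,…,λ_{N+1} ≥ -δ > -λ ≥ λ_{N+2} ≥ …, and u with ⟨f_{N+1},u⟩ ≠ 0), set F_u = (1/⟨f_{N+1},u⟩) Σ_{i=1}^N ⟨f_i,u⟩ f_i + f_{N+1} and g_i = f_i - (⟨f_i,u⟩/⟨f_{N+1},u⟩) f_{N+1} for i = 1,…,N. If |cos ∠(F_u, u)| ≥ √(δ/λ), then every h ∈ span{u, g₁,…,g_N}^⊥ satisfies ⟨Lh, h⟩/‖h‖² ≤ (δ - λ cos² ∠(F_u,u)) / (cos² ∠(F_u,u) + 1). -/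
open scoped RealInnerProductSpace

lemma tail_bound
    {H : Type*} [NormedAddCommGroup H] [InnerProductSpace ℝ H] [CompleteSpace H]
    (L : H →L[ℝ] H) (hLsa : ∀ x y : H, ⟪L x, y⟫ = ⟪x, L y⟫)
    (f : ℕ → H) (lam : ℕ → ℝ)
    (hon : Orthonormal ℝ f)
    (htot : (Submodule.span ℝ (Set.range f)).topologicalClosure = ⊤)
    (heig : ∀ k, L (f k) = lam k • f k)
    (N : ℕ) (lambda : ℝ)
    (hbig : ∀ k, N < k → lam k ≤ -lambda)
    (v : H) (hv : ∀ k ≤ N, ⟪f k, v⟫ = 0) :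
    ⟪L v, v⟫ ≤ -lambda * ‖v‖ ^ 2 := by
  set b : HilbertBasis ℕ ℝ H := HilbertBasis.mk hon htot.ge with hb
  have hbc : ∀ i, b i = f i := fun i => congrFun (HilbertBasis.coe_mk hon htot.ge) i
  have hlb : ∀ k, |lam k| ≤ ‖L‖ := by
    intro k
    have h1 : ‖L (f k)‖ ≤ ‖L‖ := by
      calc ‖L (f k)‖ ≤ ‖L‖ * ‖f k‖ := L.le_opNorm _
      _ = ‖L‖ := by rw [hon.1 k, mul_one]
    rwa [heig, norm_smul, hon.1 k, mul_one, Real.norm_eq_abs] at h1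
  have hterm : ∀ k, ⟪L v, f k⟫ * ⟪f k, v⟫ = lam k * (⟪f k, v⟫ * ⟪f k, v⟫) := by
    intro k
    rw [hLsa, heig, real_inner_smul_right, real_inner_comm v (f k)]
    ring
  have hsum1 : Summable fun k => ⟪f k, v⟫ * ⟪f k, v⟫ := by
    have := b.summable_inner_mul_inner v v
    simpa [hbc, real_inner_comm v] using this
  have hsum2 : Summable fun k => lam k * (⟪f k, v⟫ * ⟪f k, v⟫) := by
    apply Summable.of_abs
    refine Summable.of_nonneg_of_le (fun k => abs_nonneg _) (fun k => ?_)
      (hsum1.mul_left ‖L‖)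
    rw [abs_mul, abs_mul, abs_mul_abs_self]
    exact mul_le_mul_of_nonneg_right (hlb k) (mul_self_nonneg _)
  have hLvv : ⟪L v, v⟫ = ∑' k, lam k * (⟪f k, v⟫ * ⟪f k, v⟫) := by
    rw [← b.tsum_inner_mul_inner (L v) v]
    exact tsum_congr fun k => by rw [hbc, hterm]
  have hvv : ‖v‖ ^ 2 = ∑' k, ⟪f k, v⟫ * ⟪f k, v⟫ := by
    rw [← real_inner_self_eq_norm_sq, ← b.tsum_inner_mul_inner v v]
    exact tsum_congr fun k => by rw [hbc, real_inner_comm v (f k)]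
  rw [hLvv, hvv, ← tsum_mul_left]
  refine Summable.tsum_le_tsum (fun k => ?_) hsum2 (hsum1.mul_left _)
  rcases le_or_gt k N with hk | hk
  · simp [hv k hk]
  · have h1 : lam k ≤ -lambda := hbig k hk
    nlinarith [mul_self_nonneg ⟪f k, v⟫]

set_option maxHeartbeats 1000000 in
theorem spectral_gap_rayleigh_bound
    {H : Type*} [NormedAddCommGroup H] [InnerProductSpace ℝ H] [CompleteSpace H]
    (L : H →L[ℝ] H) (hLsa : ∀ x y : H, ⟪L x, y⟫ = ⟪x, L y⟫)
    (f : ℕ → H) (lam : ℕ → ℝ)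
    (hon : Orthonormal ℝ f)
    (htot : (Submodule.span ℝ (Set.range f)).topologicalClosure = ⊤)
    (heig : ∀ k, L (f k) = lam k • f k)
    (N : ℕ) (δ lambda : ℝ) (hδ : 0 < δ) (hδlam : δ < lambda)
    (hsmall : ∀ k ≤ N, |lam k| ≤ δ)
    (hbig : ∀ k, N < k → lam k ≤ -lambda)
    (hdecr : ∀ k j, N < k → k ≤ j → lam j ≤ lam k)
    (u : H) (hu : ⟪f N, u⟫ ≠ 0) (hune : u ≠ 0)
    (Fu : H)
    (hFu : Fu = (⟪f N, u⟫)⁻¹ • (∑ i ∈ Finset.range N, ⟪f i, u⟫ • f i) + f N)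
    (cosang : ℝ) (hcos : cosang = ⟪Fu, u⟫ / (‖Fu‖ * ‖u‖))
    (hangle : Real.sqrt (δ / lambda) ≤ |cosang|)
    (h : H) (hne : h ≠ 0)
    (hhu : ⟪h, u⟫ = 0)
    (hg : ∀ i < N, ⟪h, f i - (⟪f i, u⟫ / ⟪f N, u⟫) • f N⟫ = 0) :
    ⟪L h, h⟫ / ‖h‖ ^ 2 ≤ (δ - lambda * cosang ^ 2) / (cosang ^ 2 + 1) := by
  set t : ℝ := ⟪f N, u⟫ with ht
  set c : ℕ → ℝ := fun i => ⟪f i, h⟫ with hc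
  set hl : H := ∑ i ∈ Finset.range (N+1), c i • f i with hhl
  set hh : H := h - hl with hhh
  have hadd : h = hl + hh := by rw [hhh]; abel
  have hfl : ∀ j ≤ N, ⟪f j, hl⟫ = c j := by
    intro j hj
    exact hon.inner_right_sum c (Finset.mem_range.mpr (Nat.lt_succ_of_le hj))
  have hfh : ∀ j ≤ N, ⟪f j, hh⟫ = 0 := by
    intro j hj
    rw [hhh, inner_sub_right, hfl j hj, sub_self]
  have hci : ∀ i < N, c i = (⟪f i, u⟫ / t) * c N := by
    intro i hi
    have h1 := hg i hi
    rw [inner_sub_right, real_inner_smul_right, sub_eq_zero] at h1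
    show (⟪f i, h⟫ : ℝ) = (⟪f i, u⟫ / t) * ⟪f N, h⟫
    rw [real_inner_comm h (f i), real_inner_comm h (f N)]
    exact h1
  have hlF : hl = c N • Fu := by
    rw [hhl, hFu, smul_add, Finset.sum_range_succ]
    congr 1
    rw [Finset.smul_sum, Finset.smul_sum]
    refine Finset.sum_congr rfl fun i hi => ?_
    rw [smul_smul, smul_smul, hci i (Finset.mem_range.mp hi)]
    congr 1
    field_simp
  have hlhh : ⟪hl, hh⟫ = 0 := by
    conv_lhs => rw [hhl]
    rw [sum_inner]
    refine Finset.sum_eq_zero fun i hi => ?_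
    rw [real_inner_smul_left, hfh i (Nat.lt_succ_iff.mp (Finset.mem_range.mp hi)), mul_zero]
  set a : ℝ := ‖hl‖ ^ 2 with ha
  set bb : ℝ := ‖hh‖ ^ 2 with hbbd
  have ha0 : 0 ≤ a := by rw [ha]; positivity
  have hnh : ‖h‖ ^ 2 = a + bb := by
    rw [hadd, ← real_inner_self_eq_norm_sq, real_inner_add_add_self, hlhh,
      real_inner_self_eq_norm_sq, real_inner_self_eq_norm_sq]
    ring
  have haF : a = c N ^ 2 * ‖Fu‖ ^ 2 := by
    rw [ha, hlF, norm_smul, Real.norm_eq_abs, mul_pow, sq_abs]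
  have hFN : ⟪f N, Fu⟫ = 1 := by
    rw [hFu, inner_add_right, real_inner_smul_right, inner_sum]
    have h2 : ∀ i ∈ Finset.range N, ⟪f N, ⟪f i, u⟫ • f i⟫ = 0 := by
      intro i hi
      rw [real_inner_smul_right, hon.2 (Finset.mem_range.mp hi).ne', mul_zero]
    rw [Finset.sum_eq_zero h2, mul_zero, zero_add, real_inner_self_eq_norm_sq, hon.1, one_pow]
  have hFune : Fu ≠ 0 := by
    intro h0
    rw [h0, inner_zero_right] at hFN
    norm_num at hFN
  have hFupos : (0:ℝ) < ‖Fu‖ := norm_pos_iff.mpr hFune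
  have hupos : (0:ℝ) < ‖u‖ := norm_pos_iff.mpr hune
  have hcos' : ⟪Fu, u⟫ = cosang * (‖Fu‖ * ‖u‖) := by
    rw [hcos, div_mul_cancel₀]
    positivity
  have huhh : ⟪u, hh⟫ = -(c N * ⟪u, Fu⟫) := by
    have h0 : ⟪u, h⟫ = 0 := by rw [real_inner_comm]; exact hhu
    rw [hadd, inner_add_right, hlF, real_inner_smul_right] at h0
    linarith
  have hCS : (c N * ⟪u, Fu⟫) ^ 2 ≤ ‖u‖ ^ 2 * bb := by
    have h3 := abs_real_inner_le_norm u hh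
    have h2 : ⟪u, hh⟫ ^ 2 ≤ (‖u‖ * ‖hh‖) ^ 2 := by
      rw [← sq_abs ⟪u, hh⟫]
      exact pow_le_pow_left₀ (abs_nonneg _) h3 2
    rw [huhh] at h2
    calc (c N * ⟪u, Fu⟫) ^ 2 = (-(c N * ⟪u, Fu⟫)) ^ 2 := by ring
    _ ≤ (‖u‖ * ‖hh‖) ^ 2 := h2
    _ = ‖u‖ ^ 2 * bb := by rw [hbbd]; ring
  have hkey : a * cosang ^ 2 ≤ bb := by
    have h1 : (c N * ⟪u, Fu⟫) ^ 2 = a * cosang ^ 2 * ‖u‖ ^ 2 := by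
      rw [real_inner_comm Fu u, hcos', haF]; ring
    rw [h1] at hCS
    have hu2 : (0:ℝ) < ‖u‖ ^ 2 := by positivity
    nlinarith
  have hLl : L hl = ∑ i ∈ Finset.range (N+1), (c i * lam i) • f i := by
    rw [hhl, map_sum]
    refine Finset.sum_congr rfl fun i _ => ?_
    rw [map_smul, heig, smul_smul]
  have hLlhh : ⟪L hl, hh⟫ = 0 := by
    rw [hLl, sum_inner]
    refine Finset.sum_eq_zero fun i hi => ?_
    rw [real_inner_smul_left, hfh i (Nat.lt_succ_iff.mp (Finset.mem_range.mp hi)), mul_zero]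
  have hasum : a = ∑ i ∈ Finset.range (N+1), c i * c i := by
    rw [ha, ← real_inner_self_eq_norm_sq]
    conv_lhs => rw [hhl]
    rw [sum_inner]
    refine Finset.sum_congr rfl fun i hi => ?_
    rw [real_inner_smul_left, hfl i (Nat.lt_succ_iff.mp (Finset.mem_range.mp hi))]
  have hLll : ⟪L hl, hl⟫ ≤ δ * a := by
    have he : ⟪L hl, hl⟫ = ∑ i ∈ Finset.range (N+1), lam i * (c i * c i) := by
      rw [hLl, sum_inner]
      refine Finset.sum_congr rfl fun i hi => ?_
      rw [real_inner_smul_left, hfl i (Nat.lt_succ_iff.mp (Finset.mem_range.mp hi))]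
      ring
    rw [he, hasum, Finset.mul_sum]
    refine Finset.sum_le_sum fun i hi => ?_
    have h4 := hsmall i (Nat.lt_succ_iff.mp (Finset.mem_range.mp hi))
    nlinarith [mul_self_nonneg (c i), abs_le.mp h4]
  have hLhh : ⟪L hh, hh⟫ ≤ -lambda * bb :=
    tail_bound L hLsa f lam hon htot heig N lambda hbig hh hfh
  have hmain : ⟪L h, h⟫ ≤ δ * a - lambda * bb := by
    have hcross : ⟪L hh, hl⟫ = ⟪L hl, hh⟫ := by
      rw [hLsa, real_inner_comm]
    have he : ⟪L h, h⟫ = ⟪L hl, hl⟫ + 2 * ⟪L hl, hh⟫ + ⟪L hh, hh⟫ := by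
      rw [hadd, map_add, inner_add_left, inner_add_right, inner_add_right, hcross]
      ring
    rw [he, hLlhh]
    linarith
  have hpos : (0:ℝ) < a + bb := by
    rw [← hnh]
    have := norm_pos_iff.mpr hne
    positivity
  rw [hnh]
  calc ⟪L h, h⟫ / (a + bb) ≤ (δ * a - lambda * bb) / (a + bb) :=
        (div_le_div_iff_of_pos_right hpos).mpr hmain
  _ ≤ (δ - lambda * cosang ^ 2) / (cosang ^ 2 + 1) := by
      rw [div_le_div_iff₀ hpos (by positivity)]
      have final : (0:ℝ) ≤ (δ + lambda) * (bb - a * cosang ^ 2) :=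
        mul_nonneg (by linarith) (by linarith)
      nlinarith [final]
end
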